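/- (Proposition 2.1: L̃ is a coupling operator of L.) Let κ > 0. For all f, g ∈ C_b²(ℝ^d), setting h(x,y) := f(x) + g(y), one has L̃ h(x,y) = L f(x) + L g(y) for all x, y ∈ ℝ^d. -/

import Mathlib

open MeasureTheory Set
open scoped ENNReal RealInnerProductSpace

noncomputable section

/-- `ℝ^d` as a Euclidean space. -/
abbrev Ed (d : ℕ) := EuclideanSpace ℝ (Fin d)

/-- A Lévy measure on `ℝ^d`. -/
def IsLevyMeasure {d : ℕ} (ν : Measure (Ed d)) : Prop :=
  ν {0} = 0 ∧ ∫⁻ z, ENNReal.ofReal (min 1 (‖z‖ ^ 2)) ∂ν < ⊤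

/-- `ν_u := ν ∧ (δ_u ∗ ν)`. -/
def nuShift {d : ℕ} (ν : Measure (Ed d)) (u : Ed d) : Measure (Ed d) :=
  ν ⊓ ν.map (fun w => w + u)

/-- `c(x,y,u,z) = min(c(x,z), c(y,z), c(x,z−u), c(y,z−u))`. -/
def cmin {d : ℕ} (c : Ed d → Ed d → ℝ) (x y u z : Ed d) : ℝ :=
  min (min (c x z) (c y z)) (min (c x (z - u)) (c y (z - u)))

/-- `μ_{x,y,u}(dz) = c(x,y,u,z) ν_u(dz)`. -/
def muXYU {d : ℕ} (ν : Measure (Ed d)) (c : Ed d → Ed d → ℝ) (x y u : Ed d) :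
    Measure (Ed d) :=
  (nuShift ν u).withDensity (fun z => ENNReal.ofReal (cmin c x y u z))

/-- `ν̃_{x,y}(dz) = min(c(x,z), c(y,z)) ν(dz)`. -/
def nuTilde {d : ℕ} (ν : Measure (Ed d)) (c : Ed d → Ed d → ℝ) (x y : Ed d) :
    Measure (Ed d) :=
  ν.withDensity (fun z => ENNReal.ofReal (min (c x z) (c y z)))

/-- `c̃(x,y,z) = c(x,z) − min(c(x,z), c(y,z))`. -/
def ctilde {d : ℕ} (c : Ed d → Ed d → ℝ) (x y z : Ed d) : ℝ :=
  c x z - min (c x z) (c y z)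

/-- `(x−y)_κ = min(1, κ/|x−y|) (x−y)`. -/
def kap {d : ℕ} (κ : ℝ) (v : Ed d) : Ed d := (min 1 (κ / ‖v‖)) • v


/-- The Lévy type operator `L`. -/
def Lop {d : ℕ} (ν : Measure (Ed d)) (c : Ed d → Ed d → ℝ) (f : Ed d → ℝ) (x : Ed d) : ℝ :=
  ∫ z, (f (x + z) - f x - (if ‖z‖ ≤ 1 then fderiv ℝ f x z else 0)) * c x z ∂ν

/-- The coupling operator `L̃` applied to `h(x,y) = f(x) + g(y)`, for which
`∇_x h(x,y) = ∇f(x)` and `∇_y h(x,y) = ∇g(y)`. -/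
def couplingL {d : ℕ} (ν : Measure (Ed d)) (c : Ed d → Ed d → ℝ) (κ : ℝ)
    (f g : Ed d → ℝ) (x y : Ed d) : ℝ :=
  (1 / 2) * ∫ z, (f (x + z) + g (y + z + kap κ (x - y)) - (f x + g y)
      - (if ‖z‖ ≤ 1 then fderiv ℝ f x z else 0)
      - (if ‖z + kap κ (x - y)‖ ≤ 1 then fderiv ℝ g y (z + kap κ (x - y)) else 0))
      ∂(muXYU ν c x y (kap κ (y - x)))
  + (1 / 2) * ∫ z, (f (x + z) + g (y + z + kap κ (y - x)) - (f x + g y)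
      - (if ‖z‖ ≤ 1 then fderiv ℝ f x z else 0)
      - (if ‖z + kap κ (y - x)‖ ≤ 1 then fderiv ℝ g y (z + kap κ (y - x)) else 0))
      ∂(muXYU ν c x y (kap κ (x - y)))
  + (∫ z, (f (x + z) + g (y + z) - (f x + g y)
      - (if ‖z‖ ≤ 1 then fderiv ℝ f x z else 0)
      - (if ‖z‖ ≤ 1 then fderiv ℝ g y z else 0))
      ∂(nuTilde ν c x y - (2⁻¹ : ℝ≥0∞) • muXYU ν c x y (kap κ (x - y))
          - (2⁻¹ : ℝ≥0∞) • muXYU ν c x y (kap κ (y - x))))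
  + (∫ z, (f (x + z) - f x - (if ‖z‖ ≤ 1 then fderiv ℝ f x z else 0)) * ctilde c x y z ∂ν)
  + (∫ z, (g (y + z) - g y - (if ‖z‖ ≤ 1 then fderiv ℝ g y z else 0)) * ctilde c y x z ∂ν)

/-! ### Auxiliary lemmas -/

section Aux

variable {d : ℕ}

lemma fderiv_lip {f : Ed d → ℝ} (hf : ContDiff ℝ 2 f) {M2 : ℝ}
    (h2 : ∀ w, ‖iteratedFDeriv ℝ 2 f w‖ ≤ M2) (a b : Ed d) :
    ‖fderiv ℝ f a - fderiv ℝ f b‖ ≤ M2 * ‖a - b‖ := by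
  have hd1 : ContDiff ℝ 1 (fderiv ℝ f) := hf.fderiv_right (le_refl _)
  have hbd : ∀ w : Ed d, ‖fderiv ℝ (fderiv ℝ f) w‖ ≤ M2 := by
    intro w
    have e1 : ‖iteratedFDeriv ℝ 0 (fderiv ℝ (fderiv ℝ f)) w‖ = ‖fderiv ℝ (fderiv ℝ f) w‖ :=
      norm_iteratedFDeriv_zero
    have e2 : ‖iteratedFDeriv ℝ 0 (fderiv ℝ (fderiv ℝ f)) w‖
        = ‖iteratedFDeriv ℝ 1 (fderiv ℝ f) w‖ := norm_iteratedFDeriv_fderiv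
    have e3 : ‖iteratedFDeriv ℝ 1 (fderiv ℝ f) w‖ = ‖iteratedFDeriv ℝ 2 f w‖ :=
      norm_iteratedFDeriv_fderiv
    rw [← e1, e2, e3]; exact h2 w
  have := convex_univ (𝕜 := ℝ) (E := Ed d) |>.norm_image_sub_le_of_norm_fderiv_le
    (f := fderiv ℝ f) (fun w _ => (hd1.differentiable one_ne_zero).differentiableAt)
    (fun w _ => hbd w) (mem_univ b) (mem_univ a)
  simpa using this

/-- The integrand of the Lévy operator. -/
def Fker (f : Ed d → ℝ) (x z : Ed d) : ℝ :=
  f (x + z) - f x - (if ‖z‖ ≤ 1 then fderiv ℝ f x z else 0)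

lemma fker_bound {f : Ed d → ℝ} (hf : ContDiff ℝ 2 f) {M0 M2 : ℝ}
    (h0 : ∀ w, |f w| ≤ M0) (h2 : ∀ w, ‖iteratedFDeriv ℝ 2 f w‖ ≤ M2) (x z : Ed d) :
    |Fker f x z| ≤ (2 * M0 + M2) * min 1 (‖z‖ ^ 2) := by
  have hM0 : 0 ≤ M0 := le_trans (abs_nonneg _) (h0 x)
  have hM2 : 0 ≤ M2 := le_trans (norm_nonneg _) (h2 x)
  by_cases hz : ‖z‖ ≤ 1
  · have hmin : min 1 (‖z‖ ^ 2) = ‖z‖ ^ 2 := by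
      have : ‖z‖ ^ 2 ≤ 1 := by
        calc ‖z‖ ^ 2 ≤ 1 ^ 2 := pow_le_pow_left₀ (norm_nonneg z) hz 2
        _ = 1 := one_pow 2
      simp [min_eq_right this]
    rw [hmin, Fker, if_pos hz]
    set L := fderiv ℝ f x with hL
    have hder : ∀ w : Ed d, HasFDerivAt (fun w => f w - L w) (fderiv ℝ f w - L) w := by
      intro w
      exact ((hf.differentiable (by norm_num)).differentiableAt.hasFDerivAt).sub
        (L.hasFDerivAt)
    have key := (convex_closedBall x ‖z‖).norm_image_sub_le_of_norm_hasFDerivWithin_le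
      (f := fun w => f w - L w) (f' := fun w => fderiv ℝ f w - L) (C := M2 * ‖z‖)
      (fun w _ => (hder w).hasFDerivWithinAt)
      (fun w hw => by
        have : ‖fderiv ℝ f w - fderiv ℝ f x‖ ≤ M2 * ‖w - x‖ := fderiv_lip hf h2 w x
        calc ‖fderiv ℝ f w - L‖ ≤ M2 * ‖w - x‖ := this
          _ ≤ M2 * ‖z‖ := by
              apply mul_le_mul_of_nonneg_left _ hM2
              simpa [dist_eq_norm] using hw)
      (x := x) (y := x + z)
      (Metric.mem_closedBall_self (norm_nonneg z))
      (by simp [Metric.mem_closedBall, dist_eq_norm])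
    have h4 : |f (x + z) - L (x + z) - (f x - L x)| ≤ M2 * ‖z‖ * ‖x + z - x‖ := by
      simpa [Real.norm_eq_abs] using key
    have hz' : ‖x + z - x‖ = ‖z‖ := by simp
    rw [hz'] at h4
    have heq : f (x + z) - L (x + z) - (f x - L x) = f (x + z) - f x - L z := by
      have : L (x + z) = L x + L z := by rw [← L.map_add]
      rw [this]; ring
    rw [heq] at h4
    calc |f (x + z) - f x - L z| ≤ M2 * ‖z‖ * ‖z‖ := h4
      _ = M2 * ‖z‖ ^ 2 := by ring
      _ ≤ (2 * M0 + M2) * ‖z‖ ^ 2 := by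
          apply mul_le_mul_of_nonneg_right _ (by positivity)
          linarith
  · have hmin : min 1 (‖z‖ ^ 2) = 1 := by
      have : (1:ℝ) ≤ ‖z‖ ^ 2 := by
        have h1 : (1:ℝ) ≤ ‖z‖ := le_of_not_ge hz
        calc (1:ℝ) = 1 ^ 2 := by norm_num
          _ ≤ ‖z‖ ^ 2 := pow_le_pow_left₀ (by norm_num) h1 2
      simp [min_eq_left this]
    rw [hmin, Fker, if_neg hz]
    calc |f (x + z) - f x - 0| = |f (x + z) - f x| := by ring_nf
      _ ≤ |f (x + z)| + |f x| := abs_sub _ _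
      _ ≤ M0 + M0 := add_le_add (h0 _) (h0 _)
      _ ≤ (2 * M0 + M2) * 1 := by linarith

lemma fker_meas {f : Ed d → ℝ} (hf : Continuous f) (x : Ed d) :
    Measurable (Fker f x) := by
  have h1 : Measurable fun z : Ed d => f (x + z) - f x :=
    ((hf.comp (continuous_const.add continuous_id)).sub continuous_const).measurable
  have h2 : Measurable fun z : Ed d => (if ‖z‖ ≤ 1 then fderiv ℝ f x z else 0) := by
    apply Measurable.ite
    · exact measurableSet_le continuous_norm.measurable measurable_const
    · exact (fderiv ℝ f x).continuous.measurable
    · exact measurable_const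
  exact h1.sub h2

lemma levy_int {ν : Measure (Ed d)} (hν : ∫⁻ z, ENNReal.ofReal (min 1 (‖z‖ ^ 2)) ∂ν < ⊤) :
    Integrable (fun z : Ed d => min 1 (‖z‖ ^ 2)) ν := by
  refine ⟨(continuous_const.min (continuous_norm.pow 2)).measurable.aestronglyMeasurable, ?_⟩
  rw [HasFiniteIntegral]
  have : ∀ z : Ed d, (‖min 1 (‖z‖ ^ 2)‖ₑ) = ENNReal.ofReal (min 1 (‖z‖ ^ 2)) := by
    intro z
    rw [← ofReal_norm, Real.norm_eq_abs, abs_of_nonneg (by positivity)]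
  simpa only [this] using hν

lemma integrable_of_le_smul {ν m : Measure (Ed d)} {C : ℝ} {F : Ed d → ℝ}
    (hm : m ≤ ENNReal.ofReal C • ν) (hFi : Integrable F ν) : Integrable F m :=
  Integrable.mono_measure (hFi.smul_measure ENNReal.ofReal_ne_top) hm

lemma withDensity_le_withDensity {m₁ m₂ : Measure (Ed d)} (h : m₁ ≤ m₂) (ρ : Ed d → ℝ≥0∞) :
    m₁.withDensity ρ ≤ m₂.withDensity ρ := by
  rw [Measure.le_iff]
  intro s hs
  rw [withDensity_apply _ hs, withDensity_apply _ hs]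
  exact lintegral_mono' (Measure.restrict_mono (subset_refl s) h) le_rfl

lemma tmap_map (m : Measure (Ed d)) (a b : Ed d) :
    (m.map (· + a)).map (· + b) = m.map (· + (a + b)) := by
  rw [Measure.map_map (measurable_add_const b) (measurable_add_const a)]
  congr 1
  funext w
  simp [Function.comp, add_assoc]

lemma tmap_id (m : Measure (Ed d)) : m.map (· + (0 : Ed d)) = m := by
  simp

lemma tmap_inf (a b : Measure (Ed d)) (v : Ed d) :
    (a ⊓ b).map (· + v) = a.map (· + v) ⊓ b.map (· + v) := by
  apply le_antisymm
  · exact le_inf (Measure.map_mono inf_le_left (measurable_add_const v))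
      (Measure.map_mono inf_le_right (measurable_add_const v))
  · have h1 : (a.map (· + v) ⊓ b.map (· + v)).map (· + (-v)) ≤ a ⊓ b := by
      refine le_inf ?_ ?_
      · have := Measure.map_mono (inf_le_left (a := a.map (· + v)) (b := b.map (· + v)))
          (measurable_add_const (-v))
        rwa [tmap_map, add_neg_cancel, tmap_id] at this
      · have := Measure.map_mono (inf_le_right (a := a.map (· + v)) (b := b.map (· + v)))
          (measurable_add_const (-v))
        rwa [tmap_map, add_neg_cancel, tmap_id] at this
    have h2 := Measure.map_mono h1 (measurable_add_const v)
    rwa [tmap_map, neg_add_cancel, tmap_id] at h2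

lemma tmap_withDensity (m : Measure (Ed d)) (ρ : Ed d → ℝ≥0∞) (hρ : Measurable ρ) (v : Ed d) :
    (m.withDensity ρ).map (· + v) = (m.map (· + v)).withDensity (fun z => ρ (z - v)) := by
  ext s hs
  rw [Measure.map_apply (measurable_add_const v) hs, withDensity_apply _ hs,
    withDensity_apply _ ((measurable_add_const v) hs),
    setLIntegral_map (f := fun z => ρ (z - v)) hs (hρ.comp (measurable_sub_const v))
      (measurable_add_const v)]
  simp

lemma map_nuShift (ν : Measure (Ed d)) (v : Ed d) :
    (nuShift ν (-v)).map (· + v) = nuShift ν v := by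
  rw [nuShift, tmap_inf, tmap_map, neg_add_cancel, tmap_id, nuShift, inf_comm]

lemma cmin_meas {c : Ed d → Ed d → ℝ} (hc : Continuous (fun p : Ed d × Ed d => c p.1 p.2))
    (x y u : Ed d) : Measurable (fun z => ENNReal.ofReal (cmin c x y u z)) := by
  have hcz : ∀ w : Ed d, Continuous (fun z : Ed d => c w z) := fun w =>
    hc.comp (continuous_const.prodMk continuous_id)
  have : Continuous (fun z => cmin c x y u z) := by
    unfold cmin
    exact ((hcz x).min (hcz y)).min
      (((hcz x).comp (continuous_id.sub continuous_const : Continuous (fun z : Ed d => z - u))).min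
      ((hcz y).comp (continuous_id.sub continuous_const : Continuous (fun z : Ed d => z - u))))
  exact ENNReal.measurable_ofReal.comp this.measurable

lemma map_muXYU (ν : Measure (Ed d)) {c : Ed d → Ed d → ℝ}
    (hc : Continuous (fun p : Ed d × Ed d => c p.1 p.2)) (x y v : Ed d) :
    (muXYU ν c x y (-v)).map (· + v) = muXYU ν c x y v := by
  rw [muXYU, tmap_withDensity _ _ (cmin_meas hc x y (-v)) v, map_nuShift, muXYU]
  congr 1
  funext z
  congr 1
  unfold cmin
  rw [min_comm]
  congr 2 <;> simp [sub_neg_eq_add, sub_add_cancel]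

lemma nu_tail_finite {ν : Measure (Ed d)}
    (hν : ∫⁻ z, ENNReal.ofReal (min 1 (‖z‖ ^ 2)) ∂ν < ⊤) {r : ℝ} (hr : 0 < r) :
    ν {z : Ed d | r ≤ ‖z‖} < ⊤ := by
  set s : Set (Ed d) := {z | r ≤ ‖z‖} with hs
  have hlow : ∀ z ∈ s, ENNReal.ofReal (min 1 (r ^ 2)) ≤ ENNReal.ofReal (min 1 (‖z‖ ^ 2)) := by
    intro z hz
    apply ENNReal.ofReal_le_ofReal
    exact min_le_min le_rfl (pow_le_pow_left₀ hr.le hz 2)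
  have key : ENNReal.ofReal (min 1 (r ^ 2)) * ν s ≤ ∫⁻ z, ENNReal.ofReal (min 1 (‖z‖ ^ 2)) ∂ν := by
    calc ENNReal.ofReal (min 1 (r ^ 2)) * ν s
        = ∫⁻ _ in s, ENNReal.ofReal (min 1 (r ^ 2)) ∂ν := by
          rw [setLIntegral_const]
      _ ≤ ∫⁻ z in s, ENNReal.ofReal (min 1 (‖z‖ ^ 2)) ∂ν := setLIntegral_mono
          (ENNReal.measurable_ofReal.comp
            (continuous_const.min (continuous_norm.pow 2)).measurable) hlow
      _ ≤ ∫⁻ z, ENNReal.ofReal (min 1 (‖z‖ ^ 2)) ∂ν := setLIntegral_le_lintegral _ _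
  have hpos : ENNReal.ofReal (min 1 (r ^ 2)) ≠ 0 := by
    simp only [ne_eq, ENNReal.ofReal_eq_zero, not_le]
    positivity
  by_contra hcon
  push_neg at hcon
  rw [top_le_iff.mp hcon, ENNReal.mul_top hpos] at key
  exact hν.not_ge key

lemma nuShift_finite {ν : Measure (Ed d)}
    (hν : ∫⁻ z, ENNReal.ofReal (min 1 (‖z‖ ^ 2)) ∂ν < ⊤) {u : Ed d} (hu : u ≠ 0) :
    IsFiniteMeasure (nuShift ν u) := by
  constructor
  have hupos : 0 < ‖u‖ := norm_pos_iff.mpr hu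
  set r := ‖u‖ / 2 with hr
  have hrpos : 0 < r := by positivity
  set B : Set (Ed d) := Metric.ball 0 r with hB
  have h1 : nuShift ν u Bᶜ ≤ ν {z : Ed d | r ≤ ‖z‖} := by
    refine le_trans (inf_le_left (b := ν.map (fun w => w + u)) Bᶜ) (measure_mono ?_)
    intro z hz
    simp only [hB, Metric.mem_ball, dist_zero_right, not_lt, mem_compl_iff] at hz
    exact hz
  have h2 : nuShift ν u B ≤ ν {z : Ed d | r ≤ ‖z‖} := by
    refine le_trans (inf_le_right (a := ν) B) ?_
    rw [Measure.map_apply (measurable_add_const u) measurableSet_ball]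
    refine measure_mono ?_
    intro w hw
    simp only [mem_preimage, hB, Metric.mem_ball, dist_zero_right] at hw
    simp only [mem_setOf_eq]
    have htri : ‖u‖ ≤ ‖w + u‖ + ‖w‖ := by
      calc ‖u‖ = ‖(w + u) - w‖ := by congr 1; abel
        _ ≤ ‖w + u‖ + ‖w‖ := norm_sub_le _ _
    rw [hr] at hw ⊢
    linarith
  calc nuShift ν u univ ≤ nuShift ν u B + nuShift ν u Bᶜ := by
        rw [← union_compl_self B] at *
        exact measure_union_le _ _
    _ ≤ ν {z : Ed d | r ≤ ‖z‖} + ν {z : Ed d | r ≤ ‖z‖} := add_le_add h2 h1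
    _ < ⊤ := by
        have := nu_tail_finite hν hrpos
        exact ENNReal.add_lt_top.mpr ⟨this, this⟩

lemma le_meas_sub {t b m : Measure (Ed d)} [IsFiniteMeasure b] (h : t + b ≤ m) : t ≤ m - b := by
  refine le_sInf ?_
  intro dd hdd
  simp only [mem_setOf_eq] at hdd
  have : b + t ≤ b + dd := by
    calc b + t = t + b := add_comm _ _
      _ ≤ m := h
      _ ≤ dd + b := hdd
      _ = b + dd := add_comm _ _
  exact Measure.le_of_add_le_add_left this

lemma decomp_meas (nt μp μm : Measure (Ed d)) [IsFiniteMeasure μp] [IsFiniteMeasure μm]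
    (h : (2⁻¹ : ℝ≥0∞) • μp + (2⁻¹ : ℝ≥0∞) • μm ≤ nt) :
    (nt - (2⁻¹ : ℝ≥0∞) • μp - (2⁻¹ : ℝ≥0∞) • μm) + (2⁻¹ : ℝ≥0∞) • μm + (2⁻¹ : ℝ≥0∞) • μp
      = nt := by
  haveI ip : IsFiniteMeasure ((2⁻¹ : ℝ≥0∞) • μp) := ⟨by
    rw [Measure.smul_apply, smul_eq_mul]
    exact ENNReal.mul_lt_top (by simp) (measure_lt_top _ _)⟩
  haveI im : IsFiniteMeasure ((2⁻¹ : ℝ≥0∞) • μm) := ⟨by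
    rw [Measure.smul_apply, smul_eq_mul]
    exact ENNReal.mul_lt_top (by simp) (measure_lt_top _ _)⟩
  have h1 : (2⁻¹ : ℝ≥0∞) • μm ≤ nt - (2⁻¹ : ℝ≥0∞) • μp := by
    apply le_meas_sub
    calc (2⁻¹ : ℝ≥0∞) • μm + (2⁻¹ : ℝ≥0∞) • μp = (2⁻¹ : ℝ≥0∞) • μp + (2⁻¹ : ℝ≥0∞) • μm :=
          add_comm _ _
      _ ≤ nt := h
  have h2 : (2⁻¹ : ℝ≥0∞) • μp ≤ nt := le_trans (Measure.le_add_right le_rfl) h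
  rw [Measure.sub_add_cancel_of_le h1, Measure.sub_add_cancel_of_le h2]

lemma integral_wd (m : Measure (Ed d)) (w : Ed d → ℝ) (hw : Measurable w) (hw0 : ∀ z, 0 ≤ w z)
    (F : Ed d → ℝ) :
    ∫ z, F z ∂(m.withDensity fun z => ENNReal.ofReal (w z)) = ∫ z, F z * w z ∂m := by
  have h1 : (fun z => ENNReal.ofReal (w z))
      = fun z => (((fun z => Real.toNNReal (w z)) z : NNReal) : ℝ≥0∞) := rfl
  rw [h1, integral_withDensity_eq_integral_smul (hw.real_toNNReal) F]
  congr 1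
  funext z
  rw [NNReal.smul_def, Real.coe_toNNReal _ (hw0 z), smul_eq_mul, mul_comm]

lemma integrable_mul_bdd {m : Measure (Ed d)} {F w : Ed d → ℝ} (hF : Integrable F m)
    (hw : AEStronglyMeasurable w m) {B : ℝ} (hb : ∀ z, |w z| ≤ B) :
    Integrable (fun z => F z * w z) m := by
  have h := hF.bdd_mul (f := w) (c := B) hw
    (ae_of_all _ fun z => by rw [Real.norm_eq_abs]; exact hb z)
  exact h.congr (ae_of_all _ fun z => mul_comm _ _)

lemma half_add_meas (m : Measure (Ed d)) : (2⁻¹ : ℝ≥0∞) • m + (2⁻¹ : ℝ≥0∞) • m = m := by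
  rw [← add_smul, ENNReal.inv_two_add_inv_two, one_smul]

lemma smul_mono_meas {a b : Measure (Ed d)} (cc : ℝ≥0∞) (h : a ≤ b) : cc • a ≤ cc • b := by
  rw [Measure.le_iff]
  intro s hs
  rw [Measure.smul_apply, Measure.smul_apply, smul_eq_mul, smul_eq_mul]
  exact mul_le_mul_right (Measure.le_iff'.mp h s) cc

end Aux

/-- Proposition 2.1: `L̃` is a coupling operator of `L`, i.e. for all
`f, g ∈ C_b²(ℝ^d)` and `h(x,y) = f(x) + g(y)` one has `L̃h(x,y) = Lf(x) + Lg(y)`. -/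
theorem statement3 {d : ℕ} (ν : Measure (Ed d)) (hν : IsLevyMeasure ν)
    (c : Ed d → Ed d → ℝ) (cLo cUp : ℝ) (hcLo : 0 < cLo) (hcUp : cLo ≤ cUp)
    (hc_cont : Continuous (fun p : Ed d × Ed d => c p.1 p.2))
    (hc_bound : ∀ x z, cLo ≤ c x z ∧ c x z ≤ cUp)
    (κ : ℝ) (hκ : 0 < κ)
    (f g : Ed d → ℝ) (hf : ContDiff ℝ 2 f) (hg : ContDiff ℝ 2 g)
    (Mf0 Mf1 Mf2 Mg0 Mg1 Mg2 : ℝ)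
    (hf0 : ∀ x, |f x| ≤ Mf0) (hf1 : ∀ x, ‖fderiv ℝ f x‖ ≤ Mf1)
    (hf2 : ∀ x, ‖iteratedFDeriv ℝ 2 f x‖ ≤ Mf2)
    (hg0 : ∀ x, |g x| ≤ Mg0) (hg1 : ∀ x, ‖fderiv ℝ g x‖ ≤ Mg1)
    (hg2 : ∀ x, ‖iteratedFDeriv ℝ 2 g x‖ ≤ Mg2)
    (x y : Ed d) :
    couplingL ν c κ f g x y = Lop ν c f x + Lop ν c g y := by
  obtain ⟨hν0, hν2⟩ := hν
  have hcUp_pos : 0 < cUp := lt_of_lt_of_le hcLo hcUp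
  have hczx : ∀ w : Ed d, Continuous fun z => c w z := fun w =>
    hc_cont.comp (continuous_const.prodMk continuous_id)
  -- measurability of kernels
  have hFm : Measurable (Fker f x) := fker_meas hf.continuous x
  have hGm : Measurable (Fker g y) := fker_meas hg.continuous y
  -- integrability w.r.t. ν
  have hbase := levy_int hν2
  have hFint : Integrable (Fker f x) ν := by
    refine Integrable.mono' (hbase.const_mul (2 * Mf0 + Mf2)) hFm.aestronglyMeasurable ?_
    exact ae_of_all _ fun z => by
      rw [Real.norm_eq_abs]; exact fker_bound hf hf0 hf2 x z
  have hGint : Integrable (Fker g y) ν := by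
    refine Integrable.mono' (hbase.const_mul (2 * Mg0 + Mg2)) hGm.aestronglyMeasurable ?_
    exact ae_of_all _ fun z => by
      rw [Real.norm_eq_abs]; exact fker_bound hg hg0 hg2 y z
  -- dominated measures
  have hnt_le : nuTilde ν c x y ≤ ENNReal.ofReal cUp • ν := by
    rw [nuTilde, ← withDensity_const]
    exact withDensity_mono (ae_of_all _ fun z => ENNReal.ofReal_le_ofReal
      (le_trans (min_le_left _ _) (hc_bound x z).2))
  have hmu_le_nt : ∀ u, muXYU ν c x y u ≤ nuTilde ν c x y := fun u => by
    rw [muXYU, nuTilde]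
    calc (nuShift ν u).withDensity (fun z => ENNReal.ofReal (cmin c x y u z))
        ≤ ν.withDensity (fun z => ENNReal.ofReal (cmin c x y u z)) :=
          withDensity_le_withDensity inf_le_left _
      _ ≤ ν.withDensity (fun z => ENNReal.ofReal (min (c x z) (c y z))) :=
          withDensity_mono (ae_of_all _ fun z => ENNReal.ofReal_le_ofReal (min_le_left _ _))
  have hmu_le : ∀ u, muXYU ν c x y u ≤ ENNReal.ofReal cUp • ν := fun u =>
    le_trans (hmu_le_nt u) hnt_le
  -- integrability transfer
  have hIntF : ∀ m : Measure (Ed d), m ≤ ENNReal.ofReal cUp • ν → Integrable (Fker f x) m :=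
    fun m hm => integrable_of_le_smul hm hFint
  have hIntG : ∀ m : Measure (Ed d), m ≤ ENNReal.ofReal cUp • ν → Integrable (Fker g y) m :=
    fun m hm => integrable_of_le_smul hm hGint
  -- min density facts
  have hw_meas : Measurable fun z => min (c x z) (c y z) :=
    ((hczx x).min (hczx y)).measurable
  have hw_nonneg : ∀ z, 0 ≤ min (c x z) (c y z) := fun z =>
    le_trans hcLo.le (le_min (hc_bound x z).1 (hc_bound y z).1)
  have htoReal : ((2⁻¹ : ℝ≥0∞)).toReal = (2⁻¹ : ℝ) := by simp
  -- the `ctilde` integrals combine with `nuTilde` integrals to give `Lop`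
  have hctilde_f : ∫ z, Fker f x z ∂(nuTilde ν c x y)
      + ∫ z, Fker f x z * ctilde c x y z ∂ν = Lop ν c f x := by
    rw [nuTilde, integral_wd ν _ hw_meas hw_nonneg]
    rw [← integral_add]
    · rw [Lop]
      apply integral_congr_ae
      refine ae_of_all _ fun z => ?_
      simp only [Fker, ctilde]; ring
    · refine integrable_mul_bdd hFint hw_meas.aestronglyMeasurable (B := cUp)
        (fun z => ?_)
      rw [abs_of_nonneg (hw_nonneg z)]
      exact le_trans (min_le_left _ _) (hc_bound x z).2
    · refine integrable_mul_bdd hFint ?_ (B := cUp) (fun z => ?_)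
      · exact (((hczx x).sub ((hczx x).min (hczx y))).measurable).aestronglyMeasurable
      · have h1 := (hc_bound x z).2
        have h2 := hw_nonneg z
        have h3 : min (c x z) (c y z) ≤ c x z := min_le_left _ _
        rw [ctilde, abs_of_nonneg (by linarith)]
        linarith
  have hctilde_g : ∫ z, Fker g y z ∂(nuTilde ν c x y)
      + ∫ z, Fker g y z * ctilde c y x z ∂ν = Lop ν c g y := by
    rw [nuTilde, integral_wd ν _ hw_meas hw_nonneg]
    rw [← integral_add]
    · rw [Lop]
      apply integral_congr_ae
      refine ae_of_all _ fun z => ?_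
      simp only [Fker, ctilde]
      rw [min_comm (c y z) (c x z)]
      ring
    · refine integrable_mul_bdd hGint hw_meas.aestronglyMeasurable (B := cUp)
        (fun z => ?_)
      rw [abs_of_nonneg (hw_nonneg z)]
      exact le_trans (min_le_left _ _) (hc_bound x z).2
    · refine integrable_mul_bdd hGint ?_ (B := cUp) (fun z => ?_)
      · exact (((hczx y).sub ((hczx y).min (hczx x))).measurable).aestronglyMeasurable
      · have h1 := (hc_bound y z).2
        have h2 : min (c y z) (c x z) ≤ c y z := min_le_left _ _
        have h3 : 0 ≤ min (c y z) (c x z) :=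
          le_trans hcLo.le (le_min (hc_bound y z).1 (hc_bound x z).1)
        rw [ctilde, abs_of_nonneg (by linarith)]
        linarith
  by_cases hxy : x = y
  · subst hxy
    have hk0 : kap κ (x - x) = 0 := by simp [kap]
    have hmu0 : muXYU ν c x x 0 = nuTilde ν c x x := by
      rw [muXYU, nuTilde, nuShift]
      have hm0 : ν.map (fun w => w + (0 : Ed d)) = ν := by simp
      rw [hm0, inf_idem]
      congr 1
      funext z
      simp [cmin, sub_zero, min_self]
    have hsig : nuTilde ν c x x - (2⁻¹ : ℝ≥0∞) • nuTilde ν c x x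
        - (2⁻¹ : ℝ≥0∞) • nuTilde ν c x x = 0 :=
      Measure.sub_eq_zero_of_le
        (Measure.sub_le_of_le_add (half_add_meas (nuTilde ν c x x)).symm.le)
    have hctx : ∀ z : Ed d, ctilde c x x z = 0 := fun z => by simp [ctilde]
    have hnt_eq : ∫ z, (f (x + z) + g (x + z) - (f x + g x)
        - (if ‖z‖ ≤ 1 then fderiv ℝ f x z else 0)
        - (if ‖z‖ ≤ 1 then fderiv ℝ g x z else 0)) ∂(nuTilde ν c x x)
        = ∫ z, Fker f x z ∂(nuTilde ν c x x) + ∫ z, Fker g x z ∂(nuTilde ν c x x) := by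
      rw [← integral_add (hIntF _ hnt_le) (hIntG _ hnt_le)]
      apply integral_congr_ae
      exact ae_of_all _ fun z => by simp only [Fker]; ring
    rw [couplingL]
    simp only [hk0, add_zero, hmu0, hsig, integral_zero_measure, hctx, mul_zero, integral_zero]
    rw [hnt_eq]
    simp only [hctx, mul_zero, integral_zero, add_zero] at hctilde_f hctilde_g
    linarith [hctilde_f, hctilde_g]
  · have hxy0 : x - y ≠ 0 := sub_ne_zero_of_ne hxy
    have hVdef : kap κ (y - x) = -kap κ (x - y) := by
      rw [kap, kap, norm_sub_rev y x, show y - x = -(x - y) from by abel, smul_neg]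
    rw [couplingL]
    simp only [hVdef]
    set V := kap κ (x - y) with hV
    have hV0 : V ≠ 0 := by
      rw [hV, kap]
      exact smul_ne_zero
        (ne_of_gt (lt_min one_pos (div_pos hκ (norm_pos_iff.mpr hxy0)))) hxy0
    -- finiteness
    haveI hfinSh : IsFiniteMeasure (nuShift ν V) := nuShift_finite hν2 hV0
    haveI hfinShm : IsFiniteMeasure (nuShift ν (-V)) := nuShift_finite hν2 (neg_ne_zero.mpr hV0)
    have hmu_le_sh : ∀ u : Ed d, muXYU ν c x y u ≤ ENNReal.ofReal cUp • nuShift ν u := fun u => by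
      rw [muXYU, ← withDensity_const]
      exact withDensity_mono (ae_of_all _ fun z => ENNReal.ofReal_le_ofReal
        (le_trans (le_trans (min_le_left _ _) (min_le_left _ _)) (hc_bound x z).2))
    have hsmulfin : ∀ (m : Measure (Ed d)), IsFiniteMeasure m →
        IsFiniteMeasure (ENNReal.ofReal cUp • m) := fun m hm => ⟨by
      rw [Measure.smul_apply, smul_eq_mul]
      exact ENNReal.mul_lt_top ENNReal.ofReal_lt_top (measure_lt_top _ _)⟩
    haveI h1fin := hsmulfin _ hfinSh
    haveI h2fin := hsmulfin _ hfinShm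
    haveI hfinP : IsFiniteMeasure (muXYU ν c x y V) :=
      isFiniteMeasure_of_le _ (hmu_le_sh V)
    haveI hfinM : IsFiniteMeasure (muXYU ν c x y (-V)) :=
      isFiniteMeasure_of_le _ (hmu_le_sh (-V))
    -- decomposition of nuTilde
    have hle : (2⁻¹ : ℝ≥0∞) • muXYU ν c x y V + (2⁻¹ : ℝ≥0∞) • muXYU ν c x y (-V)
        ≤ nuTilde ν c x y := by
      calc (2⁻¹ : ℝ≥0∞) • muXYU ν c x y V + (2⁻¹ : ℝ≥0∞) • muXYU ν c x y (-V)
          ≤ (2⁻¹ : ℝ≥0∞) • nuTilde ν c x y + (2⁻¹ : ℝ≥0∞) • nuTilde ν c x y :=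
            add_le_add (smul_mono_meas _ (hmu_le_nt V)) (smul_mono_meas _ (hmu_le_nt (-V)))
        _ = nuTilde ν c x y := half_add_meas _
    have hdecomp := decomp_meas (nuTilde ν c x y) (muXYU ν c x y V) (muXYU ν c x y (-V)) hle
    -- change of variables
    have hmapP : (muXYU ν c x y (-V)).map (· + V) = muXYU ν c x y V :=
      map_muXYU ν hc_cont x y V
    have hmapM : (muXYU ν c x y V).map (· + -V) = muXYU ν c x y (-V) := by
      have h := map_muXYU ν hc_cont x y (-V)
      rwa [neg_neg] at h
    have hGshift1 : ∫ z, Fker g y (z + V) ∂(muXYU ν c x y (-V))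
        = ∫ z, Fker g y z ∂(muXYU ν c x y V) := by
      rw [← hmapP]
      exact (integral_map (measurable_add_const V).aemeasurable
        hGm.aestronglyMeasurable).symm
    have hGshift2 : ∫ z, Fker g y (z + -V) ∂(muXYU ν c x y V)
        = ∫ z, Fker g y z ∂(muXYU ν c x y (-V)) := by
      rw [← hmapM]
      exact (integral_map (measurable_add_const (-V)).aemeasurable
        hGm.aestronglyMeasurable).symm
    have hGshiftInt1 : Integrable (fun z => Fker g y (z + V)) (muXYU ν c x y (-V)) := by
      have h0 : Integrable (Fker g y) ((muXYU ν c x y (-V)).map (· + V)) := by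
        rw [hmapP]; exact hIntG _ (hmu_le V)
      exact (integrable_map_measure hGm.aestronglyMeasurable
        (measurable_add_const V).aemeasurable).mp h0
    have hGshiftInt2 : Integrable (fun z => Fker g y (z + -V)) (muXYU ν c x y V) := by
      have h0 : Integrable (Fker g y) ((muXYU ν c x y V).map (· + -V)) := by
        rw [hmapM]; exact hIntG _ (hmu_le (-V))
      exact (integrable_map_measure hGm.aestronglyMeasurable
        (measurable_add_const (-V)).aemeasurable).mp h0
    -- splitting the first two coupling integrals
    have hT1 : ∫ z, (Fker f x z + Fker g y (z + V)) ∂(muXYU ν c x y (-V))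
        = ∫ z, Fker f x z ∂(muXYU ν c x y (-V)) + ∫ z, Fker g y z ∂(muXYU ν c x y V) := by
      rw [integral_add (hIntF _ (hmu_le (-V))) hGshiftInt1, hGshift1]
    have hT2 : ∫ z, (Fker f x z + Fker g y (z + -V)) ∂(muXYU ν c x y V)
        = ∫ z, Fker f x z ∂(muXYU ν c x y V) + ∫ z, Fker g y z ∂(muXYU ν c x y (-V)) := by
      rw [integral_add (hIntF _ (hmu_le V)) hGshiftInt2, hGshift2]
    -- the difference measure
    have hsig_le : nuTilde ν c x y - (2⁻¹ : ℝ≥0∞) • muXYU ν c x y V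
        - (2⁻¹ : ℝ≥0∞) • muXYU ν c x y (-V) ≤ ENNReal.ofReal cUp • ν :=
      le_trans (le_trans Measure.sub_le Measure.sub_le) hnt_le
    have hhalf_le : ∀ u : Ed d, (2⁻¹ : ℝ≥0∞) • muXYU ν c x y u ≤ ENNReal.ofReal cUp • ν :=
      fun u => by
        refine le_trans ?_ (hmu_le u)
        rw [Measure.le_iff]
        intro s hs
        rw [Measure.smul_apply, smul_eq_mul]
        exact mul_le_of_le_one_left zero_le (by
          rw [ENNReal.inv_le_one]; exact one_le_two)
    have hT3F : ∫ z, Fker f x z ∂(nuTilde ν c x y)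
        = ∫ z, Fker f x z ∂(nuTilde ν c x y - (2⁻¹ : ℝ≥0∞) • muXYU ν c x y V
            - (2⁻¹ : ℝ≥0∞) • muXYU ν c x y (-V))
          + 2⁻¹ * ∫ z, Fker f x z ∂(muXYU ν c x y (-V))
          + 2⁻¹ * ∫ z, Fker f x z ∂(muXYU ν c x y V) := by
      conv_lhs => rw [← hdecomp]
      rw [integral_add_measure
          ((hIntF _ hsig_le).add_measure (hIntF _ (hhalf_le (-V)))) (hIntF _ (hhalf_le V)),
        integral_add_measure (hIntF _ hsig_le) (hIntF _ (hhalf_le (-V))),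
        integral_smul_measure, integral_smul_measure, htoReal, smul_eq_mul, smul_eq_mul]
    have hT3G : ∫ z, Fker g y z ∂(nuTilde ν c x y)
        = ∫ z, Fker g y z ∂(nuTilde ν c x y - (2⁻¹ : ℝ≥0∞) • muXYU ν c x y V
            - (2⁻¹ : ℝ≥0∞) • muXYU ν c x y (-V))
          + 2⁻¹ * ∫ z, Fker g y z ∂(muXYU ν c x y (-V))
          + 2⁻¹ * ∫ z, Fker g y z ∂(muXYU ν c x y V) := by
      conv_lhs => rw [← hdecomp]
      rw [integral_add_measure
          ((hIntG _ hsig_le).add_measure (hIntG _ (hhalf_le (-V)))) (hIntG _ (hhalf_le V)),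
        integral_add_measure (hIntG _ hsig_le) (hIntG _ (hhalf_le (-V))),
        integral_smul_measure, integral_smul_measure, htoReal, smul_eq_mul, smul_eq_mul]
    -- rewriting the integrands of the coupling operator
    have e1 : ∫ z, (f (x + z) + g (y + z + V) - (f x + g y)
        - (if ‖z‖ ≤ 1 then fderiv ℝ f x z else 0)
        - (if ‖z + V‖ ≤ 1 then fderiv ℝ g y (z + V) else 0)) ∂(muXYU ν c x y (-V))
        = ∫ z, (Fker f x z + Fker g y (z + V)) ∂(muXYU ν c x y (-V)) := by
      apply integral_congr_ae
      exact ae_of_all _ fun z => by simp only [Fker, add_assoc]; ring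
    have e2 : ∫ z, (f (x + z) + g (y + z + -V) - (f x + g y)
        - (if ‖z‖ ≤ 1 then fderiv ℝ f x z else 0)
        - (if ‖z + -V‖ ≤ 1 then fderiv ℝ g y (z + -V) else 0)) ∂(muXYU ν c x y V)
        = ∫ z, (Fker f x z + Fker g y (z + -V)) ∂(muXYU ν c x y V) := by
      apply integral_congr_ae
      exact ae_of_all _ fun z => by simp only [Fker, add_assoc]; ring
    have e3 : ∫ z, (f (x + z) + g (y + z) - (f x + g y)
        - (if ‖z‖ ≤ 1 then fderiv ℝ f x z else 0)
        - (if ‖z‖ ≤ 1 then fderiv ℝ g y z else 0))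
        ∂(nuTilde ν c x y - (2⁻¹ : ℝ≥0∞) • muXYU ν c x y V
            - (2⁻¹ : ℝ≥0∞) • muXYU ν c x y (-V))
        = ∫ z, Fker f x z ∂(nuTilde ν c x y - (2⁻¹ : ℝ≥0∞) • muXYU ν c x y V
            - (2⁻¹ : ℝ≥0∞) • muXYU ν c x y (-V))
          + ∫ z, Fker g y z ∂(nuTilde ν c x y - (2⁻¹ : ℝ≥0∞) • muXYU ν c x y V
            - (2⁻¹ : ℝ≥0∞) • muXYU ν c x y (-V)) := by
      rw [← integral_add (hIntF _ hsig_le) (hIntG _ hsig_le)]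
      apply integral_congr_ae
      exact ae_of_all _ fun z => by simp only [Fker]; ring
    have e4 : ∫ z, (f (x + z) - f x - (if ‖z‖ ≤ 1 then fderiv ℝ f x z else 0))
        * ctilde c x y z ∂ν = ∫ z, Fker f x z * ctilde c x y z ∂ν := rfl
    have e5 : ∫ z, (g (y + z) - g y - (if ‖z‖ ≤ 1 then fderiv ℝ g y z else 0))
        * ctilde c y x z ∂ν = ∫ z, Fker g y z * ctilde c y x z ∂ν := rfl
    rw [e1, e2, e3, hT1, hT2, e4, e5]
    linarith [hT3F, hT3G, hctilde_f, hctilde_g]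


end
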